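/- arXiv:1901.08572 — 2 statements merged into one kernel-verified Lean document; each statement's English description precedes it below -/
import Mathlib

section
/- Let γ = L·σ_min(X)²/(4 d_out), let B > 0, and let t ≥ 0. Suppose the gradient descent iterates satisfy, for every 0 ≤ s ≤ t: (i) ℓ(s) ≤ (1 − ηγ)^s · B, and (ii) σ_max(W_{L:i+1}(s)) ≤ (5/4)·m^{(L−i)/2} and σ_max(W_{i−1:1}(s)·X) ≤ (5/4)·m^{(i−1)/2}·σ_max(X) for every i ∈ {1,…,L}. Assume also 0 < ηγ ≤ 1. Then for every i ∈ {1,…,L}, ‖W_i(t+1) − W_i(0)‖_F ≤ 24·√(B·d_out)·σ_max(X) / (L·σ_min(X)²). -/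
open MeasureTheory ProbabilityTheory Matrix
open scoped BigOperators ENNReal

noncomputable section

/-- `W_j * W_{j-1} * ⋯ * W_i` for a family of square matrices (identity if `j < i`). -/
def midProd {m : ℕ} (W : ℕ → Matrix (Fin m) (Fin m) ℝ) (i j : ℕ) :
    Matrix (Fin m) (Fin m) ℝ :=
  (((List.range' i (j + 1 - i)).reverse).map W).prod

/-- Euclidean norm of a vector. -/
def enorm' {a : ℕ} (v : Fin a → ℝ) : ℝ := Real.sqrt (∑ i, v i ^ 2)

/-- Largest singular value (spectral norm): supremum of `‖A v‖` over unit vectors `v`. -/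
def smax {a b : ℕ} (A : Matrix (Fin a) (Fin b) ℝ) : ℝ :=
  ⨆ v : {v : Fin b → ℝ // ∑ j, v j ^ 2 = 1}, enorm' (A.mulVec v.1)

/-- Smallest singular value: infimum of `‖A v‖` over unit vectors `v`. -/
def smin {a b : ℕ} (A : Matrix (Fin a) (Fin b) ℝ) : ℝ :=
  ⨅ v : {v : Fin b → ℝ // ∑ j, v j ^ 2 = 1}, enorm' (A.mulVec v.1)

/-- Squared Frobenius norm of a matrix. -/
def frobSq {a b : ℕ} (A : Matrix (Fin a) (Fin b) ℝ) : ℝ := ∑ i, ∑ j, A i j ^ 2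

/-- Frobenius norm of a matrix. -/
def frob {a b : ℕ} (A : Matrix (Fin a) (Fin b) ℝ) : ℝ := Real.sqrt (frobSq A)

/-- Index type for all the entries of the weight matrices
`W_1 ∈ ℝ^{m×din}`, `W_2, …, W_{L-1} ∈ ℝ^{m×m}`, `W_L ∈ ℝ^{dout×m}`. -/
def InitIdx (L m din dout : ℕ) : Type :=
  (Fin m × Fin din) ⊕ (({k : ℕ // 2 ≤ k ∧ k ≤ L - 1}) × (Fin m × Fin m)) ⊕ (Fin dout × Fin m)

/-- The family of all entries of the weight matrices. -/
def initEntry {Ω : Type*} (L m din dout : ℕ)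
    (W1 : Ω → Matrix (Fin m) (Fin din) ℝ)
    (Wmid : ℕ → Ω → Matrix (Fin m) (Fin m) ℝ)
    (WL : Ω → Matrix (Fin dout) (Fin m) ℝ) :
    InitIdx L m din dout → Ω → ℝ :=
  fun idx ω =>
    match idx with
    | Sum.inl p => W1 ω p.1 p.2
    | Sum.inr (Sum.inl p) => Wmid p.1.1 ω p.2.1 p.2.2
    | Sum.inr (Sum.inr p) => WL ω p.1 p.2
/-- Scaling factor `1/√(m^{L-1} dout)`. -/
def scal (L m dout : ℕ) : ℝ := 1 / Real.sqrt ((m : ℝ) ^ (L - 1) * dout)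

/-- Network prediction `U = (1/√(m^{L-1} dout)) W_{L:1} X`. -/
def predU {m din dout n : ℕ} (L : ℕ) (X : Matrix (Fin din) (Fin n) ℝ)
    (W1 : Matrix (Fin m) (Fin din) ℝ) (Wmid : ℕ → Matrix (Fin m) (Fin m) ℝ)
    (WL : Matrix (Fin dout) (Fin m) ℝ) : Matrix (Fin dout) (Fin n) ℝ :=
  scal L m dout • (WL * midProd Wmid 2 (L - 1) * W1 * X)

/-- The ℓ² loss `ℓ = (1/2) ‖U - Y‖_F²`. -/
def lossVal {m din dout n : ℕ} (L : ℕ) (X : Matrix (Fin din) (Fin n) ℝ)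
    (Y : Matrix (Fin dout) (Fin n) ℝ) (W1 : Matrix (Fin m) (Fin din) ℝ)
    (Wmid : ℕ → Matrix (Fin m) (Fin m) ℝ) (WL : Matrix (Fin dout) (Fin m) ℝ) : ℝ :=
  (1 / 2) * frobSq (predU L X W1 Wmid WL - Y)

/-- Gradient of the loss w.r.t. the first-layer matrix `W_1`:
`(1/√(m^{L-1} dout)) W_{L:2}ᵀ (U - Y) Xᵀ`. -/
def grad1 {m din dout n : ℕ} (L : ℕ) (X : Matrix (Fin din) (Fin n) ℝ)
    (Y : Matrix (Fin dout) (Fin n) ℝ) (W1 : Matrix (Fin m) (Fin din) ℝ)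
    (Wmid : ℕ → Matrix (Fin m) (Fin m) ℝ) (WL : Matrix (Fin dout) (Fin m) ℝ) :
    Matrix (Fin m) (Fin din) ℝ :=
  scal L m dout • ((WL * midProd Wmid 2 (L - 1))ᵀ * (predU L X W1 Wmid WL - Y) * Xᵀ)

/-- Gradient of the loss w.r.t. the middle-layer matrix `W_k` (`2 ≤ k ≤ L-1`):
`(1/√(m^{L-1} dout)) W_{L:k+1}ᵀ (U - Y) (W_{k-1:1} X)ᵀ`. -/
def gradMid {m din dout n : ℕ} (L k : ℕ) (X : Matrix (Fin din) (Fin n) ℝ)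
    (Y : Matrix (Fin dout) (Fin n) ℝ) (W1 : Matrix (Fin m) (Fin din) ℝ)
    (Wmid : ℕ → Matrix (Fin m) (Fin m) ℝ) (WL : Matrix (Fin dout) (Fin m) ℝ) :
    Matrix (Fin m) (Fin m) ℝ :=
  scal L m dout • ((WL * midProd Wmid (k + 1) (L - 1))ᵀ * (predU L X W1 Wmid WL - Y) *
    (midProd Wmid 2 (k - 1) * W1 * X)ᵀ)

/-- Gradient of the loss w.r.t. the last-layer matrix `W_L`:
`(1/√(m^{L-1} dout)) (U - Y) (W_{L-1:1} X)ᵀ`. -/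
def gradLast {m din dout n : ℕ} (L : ℕ) (X : Matrix (Fin din) (Fin n) ℝ)
    (Y : Matrix (Fin dout) (Fin n) ℝ) (W1 : Matrix (Fin m) (Fin din) ℝ)
    (Wmid : ℕ → Matrix (Fin m) (Fin m) ℝ) (WL : Matrix (Fin dout) (Fin m) ℝ) :
    Matrix (Fin dout) (Fin m) ℝ :=
  scal L m dout • ((predU L X W1 Wmid WL - Y) * (midProd Wmid 2 (L - 1) * W1 * X)ᵀ)

/-- The `k`-th largest eigenvalue (1-indexed) of a real symmetric matrix
(junk value `0` if the matrix is not symmetric). -/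
def kthEig {N : Type*} [Fintype N] [DecidableEq N] (A : Matrix N N ℝ) (k : ℕ) : ℝ :=
  if h : A.IsHermitian then
    ((Finset.univ.val.map h.eigenvalues).sort (· ≤ ·)).getD (Fintype.card N - k) 0
  else 0

/-!
Along the trajectory every layer gradient has the form `c • (Mᵀ * (U - Y) * Pᵀ)` with
`c = 1/√(m^{L-1} d_out)`, so its Frobenius norm is at most `c ‖M‖ ‖P‖ ‖U - Y‖_F`; the spectral
bounds (ii) make `c ‖M‖ ‖P‖ ≤ (25/16) σ_max(X) / √d_out`, the powers of `m` cancelling exactly.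
The loss bound (i) gives `‖U(s) - Y‖_F ≤ √(2B) (1 - ηγ)^{s/2} ≤ √(2B) (1 - ηγ/2)^s`, so the steps
`η ‖∇_{W_i} ℓ(s)‖_F` decay geometrically with ratio `1 - ηγ/2`, and their sum is at most
`2/(ηγ)` times the first bound, which is the claimed radius because `(25/2) √2 ≤ 24`.
-/

section MatrixNorms
variable {a b c d : ℕ}

lemma enorm'_eq_norm (v : Fin a → ℝ) : enorm' v = ‖WithLp.toLp 2 v‖ := by
  simp [enorm', EuclideanSpace.norm_eq]

lemma sum_sq_eq_one_iff_norm_eq_one (v : Fin a → ℝ) :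
    ∑ j, v j ^ 2 = 1 ↔ ‖WithLp.toLp 2 v‖ = 1 := by
  rw [← enorm'_eq_norm, enorm', Real.sqrt_eq_one]

lemma frob_nonneg (A : Matrix (Fin a) (Fin b) ℝ) : 0 ≤ frob A := Real.sqrt_nonneg _

lemma frob_sq (A : Matrix (Fin a) (Fin b) ℝ) : frob A ^ 2 = frobSq A :=
  Real.sq_sqrt (Finset.sum_nonneg fun _ _ => Finset.sum_nonneg fun _ _ => sq_nonneg _)

lemma frobSq_eq_sum_enorm'_sq (A : Matrix (Fin a) (Fin b) ℝ) :
    frobSq A = ∑ j, enorm' (Aᵀ j) ^ 2 := by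
  simp only [enorm', Real.sq_sqrt (Finset.sum_nonneg fun _ _ => sq_nonneg _), frobSq,
    transpose_apply]
  exact Finset.sum_comm

section L2Operator
open scoped Matrix.Norms.L2Operator

lemma smax_eq_l2_opNorm (A : Matrix (Fin a) (Fin b) ℝ) : smax A = ‖A‖ := by
  rw [l2_opNorm_def, ← ContinuousLinearMap.sSup_sphere_eq_norm, sSup_image', smax]
  let e : {v : Fin b → ℝ // ∑ j, v j ^ 2 = 1} ≃ Metric.sphere (0 : EuclideanSpace ℝ (Fin b)) 1 :=
    { toFun := fun v => ⟨WithLp.toLp 2 v.1, by simpa using (sum_sq_eq_one_iff_norm_eq_one _).1 v.2⟩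
      invFun := fun x => ⟨WithLp.ofLp x.1, (sum_sq_eq_one_iff_norm_eq_one _).2 (by simp)⟩
      left_inv := fun _ => rfl
      right_inv := fun _ => rfl }
  exact e.iSup_congr fun v => by simp [e, enorm'_eq_norm]

lemma smax_nonneg (A : Matrix (Fin a) (Fin b) ℝ) : 0 ≤ smax A :=
  smax_eq_l2_opNorm A ▸ norm_nonneg A

lemma enorm'_mulVec_le (A : Matrix (Fin a) (Fin b) ℝ) (v : Fin b → ℝ) :
    enorm' (A *ᵥ v) ≤ smax A * enorm' v := by
  simpa [smax_eq_l2_opNorm, enorm'_eq_norm] using l2_opNorm_mulVec A (WithLp.toLp 2 v)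

lemma smax_transpose (A : Matrix (Fin a) (Fin b) ℝ) : smax Aᵀ = smax A := by
  simpa [smax_eq_l2_opNorm] using l2_opNorm_conjTranspose A

end L2Operator

section Frobenius
attribute [local instance] Matrix.frobeniusNormedAddCommGroup Matrix.frobeniusNormSMulClass

lemma frob_eq_frobenius_norm (A : Matrix (Fin a) (Fin b) ℝ) : frob A = ‖A‖ := by
  simp [frob, frobSq, frobenius_norm_def, Real.sqrt_eq_rpow]

lemma frob_transpose (A : Matrix (Fin a) (Fin b) ℝ) : frob Aᵀ = frob A := by
  simp only [frob_eq_frobenius_norm, frobenius_norm_transpose]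

lemma frob_smul (r : ℝ) (A : Matrix (Fin a) (Fin b) ℝ) : frob (r • A) = |r| * frob A := by
  simp [frob_eq_frobenius_norm, norm_smul]

lemma frob_sub_le_of_geometric_steps {V : ℕ → Matrix (Fin a) (Fin b) ℝ} {K q : ℝ} {t : ℕ}
    (hq₀ : 0 ≤ q) (hq₁ : q < 1) (h : ∀ s ≤ t, frob (V (s + 1) - V s) ≤ K * q ^ s) :
    frob (V (t + 1) - V 0) ≤ K / (1 - q) := by
  have hK : 0 ≤ K := by simpa using (frob_nonneg _).trans (h 0 t.zero_le)
  calc frob (V (t + 1) - V 0) = dist (V 0) (V (t + 1)) := by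
        rw [frob_eq_frobenius_norm, dist_comm, dist_eq_norm]
    _ ≤ ∑ s ∈ Finset.range (t + 1), dist (V s) (V (s + 1)) := dist_le_range_sum_dist V (t + 1)
    _ ≤ ∑ s ∈ Finset.range (t + 1), K * q ^ s := by
        refine Finset.sum_le_sum fun s hs => ?_
        rw [dist_comm, dist_eq_norm, ← frob_eq_frobenius_norm]
        exact h s (Nat.lt_succ_iff.1 (Finset.mem_range.1 hs))
    _ = K * ∑ s ∈ Finset.Ico 0 (t + 1), q ^ s := by rw [Finset.mul_sum, Finset.range_eq_Ico]
    _ ≤ K * (q ^ 0 / (1 - q)) := by gcongr; exact geom_sum_Ico_le_of_lt_one hq₀ hq₁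
    _ = K / (1 - q) := by ring

lemma frob_sub_le_of_gradient_steps {V G : ℕ → Matrix (Fin a) (Fin b) ℝ} {η K q : ℝ} {t : ℕ}
    (hη : 0 ≤ η) (hq₀ : 0 ≤ q) (hq₁ : q < 1) (hV : ∀ s, V (s + 1) = V s - η • G s)
    (hG : ∀ s ≤ t, frob (G s) ≤ K * q ^ s) : frob (V (t + 1) - V 0) ≤ η * K / (1 - q) := by
  refine frob_sub_le_of_geometric_steps hq₀ hq₁ fun s hs => ?_
  rw [hV s, sub_sub_cancel_left, ← neg_smul, frob_smul, abs_neg, abs_of_nonneg hη, mul_assoc]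
  exact mul_le_mul_of_nonneg_left (hG s hs) hη

end Frobenius

lemma frob_mul_le_smax_mul_frob (A : Matrix (Fin a) (Fin b) ℝ) (B : Matrix (Fin b) (Fin c) ℝ) :
    frob (A * B) ≤ smax A * frob B := by
  have hsq : frobSq (A * B) ≤ (smax A * frob B) ^ 2 := by
    rw [mul_pow, frob_sq, frobSq_eq_sum_enorm'_sq, frobSq_eq_sum_enorm'_sq, Finset.mul_sum]
    refine Finset.sum_le_sum fun j _ => ?_
    rw [← mul_pow]
    exact pow_le_pow_left₀ (Real.sqrt_nonneg _) (enorm'_mulVec_le A (Bᵀ j)) 2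
  calc frob (A * B) ≤ Real.sqrt ((smax A * frob B) ^ 2) := Real.sqrt_le_sqrt hsq
    _ = smax A * frob B := Real.sqrt_sq (mul_nonneg (smax_nonneg A) (frob_nonneg B))

lemma frob_mul_le_frob_mul_smax (A : Matrix (Fin a) (Fin b) ℝ) (B : Matrix (Fin b) (Fin c) ℝ) :
    frob (A * B) ≤ frob A * smax B := by
  simpa [← frob_transpose (A * B), transpose_mul, frob_transpose, smax_transpose, mul_comm]
    using frob_mul_le_smax_mul_frob Bᵀ Aᵀ

lemma frob_mul_transpose_le (E : Matrix (Fin a) (Fin c) ℝ) (P : Matrix (Fin d) (Fin c) ℝ) :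
    frob (E * Pᵀ) ≤ frob E * smax P := by
  simpa only [smax_transpose] using frob_mul_le_frob_mul_smax E Pᵀ

lemma frob_transpose_mul_mul_transpose_le (M : Matrix (Fin a) (Fin b) ℝ)
    (E : Matrix (Fin a) (Fin c) ℝ) (P : Matrix (Fin d) (Fin c) ℝ) :
    frob (Mᵀ * E * Pᵀ) ≤ smax M * frob E * smax P :=
  calc frob (Mᵀ * E * Pᵀ) ≤ frob (Mᵀ * E) * smax P := frob_mul_transpose_le _ P
    _ ≤ smax M * frob E * smax P := by
        gcongr
        · exact smax_nonneg P
        · simpa only [smax_transpose] using frob_mul_le_smax_mul_frob Mᵀ E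

lemma frob_le_of_half_frobSq_le {E : Matrix (Fin a) (Fin b) ℝ} {r B : ℝ} {s : ℕ}
    (hB : 0 ≤ B) (hr : r ≤ 1) (h : 1 / 2 * frobSq E ≤ (1 - r) ^ s * B) :
    frob E ≤ Real.sqrt (2 * B) * (1 - r / 2) ^ s := by
  have hq : 0 ≤ (1 - r / 2) ^ s := pow_nonneg (by linarith) s
  have hsq : frobSq E ≤ 2 * B * ((1 - r / 2) ^ s) ^ 2 := by
    rw [← pow_mul, mul_comm s, pow_mul]
    have : (1 - r) ^ s ≤ ((1 - r / 2) ^ 2) ^ s :=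
      pow_le_pow_left₀ (by linarith) (by nlinarith [sq_nonneg r]) s
    nlinarith
  calc frob E ≤ Real.sqrt (2 * B * ((1 - r / 2) ^ s) ^ 2) := Real.sqrt_le_sqrt hsq
    _ = Real.sqrt (2 * B) * (1 - r / 2) ^ s := by
        rw [Real.sqrt_mul (by positivity), Real.sqrt_sq hq]

end MatrixNorms

section Network
variable {L m din dout r : ℕ}

lemma scal_mul_rpow (hL : 1 ≤ L) (hm : 0 < m) :
    scal L m dout * (m : ℝ) ^ (((L : ℝ) - 1) / 2) = 1 / Real.sqrt dout := by
  have hpow : Real.sqrt ((m : ℝ) ^ (L - 1)) = (m : ℝ) ^ (((L : ℝ) - 1) / 2) := by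
    rw [Real.sqrt_eq_rpow, ← Real.rpow_natCast, ← Real.rpow_mul (Nat.cast_nonneg m),
      Nat.cast_sub hL]
    ring_nf
  have hmL : 0 < (m : ℝ) ^ (((L : ℝ) - 1) / 2) := by positivity
  rw [scal, Real.sqrt_mul (by positivity), hpow]
  field_simp

lemma frob_scal_smul_le {p q : ℕ} {T : Matrix (Fin p) (Fin q) ℝ} {x y σ e : ℝ}
    (hL : 1 ≤ L) (hm : 0 < m) (hxy : x + y = ((L : ℝ) - 1) / 2)
    (hT : frob T ≤ 5 / 4 * (m : ℝ) ^ x * e * (5 / 4 * (m : ℝ) ^ y * σ)) :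
    frob (scal L m dout • T) ≤ 25 / 16 / Real.sqrt dout * σ * e := by
  have hscal : 0 ≤ scal L m dout := by rw [scal]; positivity
  calc frob (scal L m dout • T) = scal L m dout * frob T := by
        rw [frob_smul, abs_of_nonneg hscal]
    _ ≤ scal L m dout * (5 / 4 * (m : ℝ) ^ x * e * (5 / 4 * (m : ℝ) ^ y * σ)) := by gcongr
    _ = 25 / 16 * (scal L m dout * (m : ℝ) ^ (x + y)) * σ * e := by
        rw [Real.rpow_add (Nat.cast_pos.2 hm)]; ring
    _ = 25 / 16 / Real.sqrt dout * σ * e := by rw [hxy, scal_mul_rpow hL hm]; ring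

/-- Hypothesis (ii) at one iterate, with `W_{L:i+1} = WL * midProd Wmid (i + 1) (L - 1)` and
`W_{i-1:1} = midProd Wmid 2 (i - 1) * W1`; the trivial cases `W_{L:L+1} = I` and `W_{0:1} X = X`
are left out. -/
def PartialProductBounds (L m : ℕ) (X : Matrix (Fin din) (Fin r) ℝ)
    (W1 : Matrix (Fin m) (Fin din) ℝ) (Wmid : ℕ → Matrix (Fin m) (Fin m) ℝ)
    (WL : Matrix (Fin dout) (Fin m) ℝ) : Prop :=
  (∀ i : ℕ, 1 ≤ i → i ≤ L - 1 →
    smax (WL * midProd Wmid (i + 1) (L - 1)) ≤ (5 / 4) * (m : ℝ) ^ (((L : ℝ) - i) / 2)) ∧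
  (∀ i : ℕ, 2 ≤ i → i ≤ L →
    smax (midProd Wmid 2 (i - 1) * W1 * X) ≤ (5 / 4) * (m : ℝ) ^ (((i : ℝ) - 1) / 2) * smax X)

variable {X : Matrix (Fin din) (Fin r) ℝ} {Y : Matrix (Fin dout) (Fin r) ℝ}
  {W1 : Matrix (Fin m) (Fin din) ℝ} {Wmid : ℕ → Matrix (Fin m) (Fin m) ℝ}
  {WL : Matrix (Fin dout) (Fin m) ℝ}

lemma frob_grad1_le (hL : 2 ≤ L) (hm : 0 < m) (h : PartialProductBounds L m X W1 Wmid WL) :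
    frob (grad1 L X Y W1 Wmid WL) ≤
      25 / 16 / Real.sqrt dout * smax X * frob (predU L X W1 Wmid WL - Y) := by
  refine frob_scal_smul_le (x := ((L : ℝ) - 1) / 2) (y := 0) (by omega) hm (by ring) ?_
  refine (frob_transpose_mul_mul_transpose_le _ _ _).trans ?_
  have hM : smax (WL * midProd Wmid 2 (L - 1)) ≤ 5 / 4 * (m : ℝ) ^ (((L : ℝ) - 1) / 2) := by
    simpa using h.1 1 le_rfl (by omega)
  have hX : smax X ≤ 5 / 4 * (m : ℝ) ^ (0 : ℝ) * smax X := by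
    rw [Real.rpow_zero]; linarith [smax_nonneg X]
  exact mul_le_mul (mul_le_mul_of_nonneg_right hM (frob_nonneg _)) hX (smax_nonneg X)
    (mul_nonneg (by positivity) (frob_nonneg _))

lemma frob_gradMid_le {k : ℕ} (hk₂ : 2 ≤ k) (hkL : k ≤ L - 1) (hm : 0 < m)
    (h : PartialProductBounds L m X W1 Wmid WL) :
    frob (gradMid L k X Y W1 Wmid WL) ≤
      25 / 16 / Real.sqrt dout * smax X * frob (predU L X W1 Wmid WL - Y) := by
  refine frob_scal_smul_le (x := ((L : ℝ) - k) / 2) (y := ((k : ℝ) - 1) / 2) (by omega) hm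
    (by ring) ?_
  refine (frob_transpose_mul_mul_transpose_le _ _ _).trans ?_
  exact mul_le_mul (mul_le_mul_of_nonneg_right (h.1 k (by omega) hkL) (frob_nonneg _))
    (h.2 k hk₂ (by omega)) (smax_nonneg _) (mul_nonneg (by positivity) (frob_nonneg _))

lemma frob_gradLast_le (hL : 2 ≤ L) (hm : 0 < m) (h : PartialProductBounds L m X W1 Wmid WL) :
    frob (gradLast L X Y W1 Wmid WL) ≤
      25 / 16 / Real.sqrt dout * smax X * frob (predU L X W1 Wmid WL - Y) := by
  refine frob_scal_smul_le (x := 0) (y := ((L : ℝ) - 1) / 2) (by omega) hm (by ring) ?_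
  refine (frob_mul_transpose_le _ _).trans ?_
  have hE : frob (predU L X W1 Wmid WL - Y) ≤ 5 / 4 * (m : ℝ) ^ (0 : ℝ) *
      frob (predU L X W1 Wmid WL - Y) := by
    rw [Real.rpow_zero]; linarith [frob_nonneg (predU L X W1 Wmid WL - Y)]
  exact mul_le_mul hE (h.2 L hL le_rfl) (smax_nonneg _)
    (mul_nonneg (by positivity) (frob_nonneg _))

end Network

lemma geometric_steps_le_radius {η σ B ℓ d : ℝ} (hη : 0 < η) (hd : 0 < d) (hℓ : 0 < ℓ)
    (hσ : 0 ≤ σ) (hB : 0 ≤ B) :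
    η * (25 / 16 / Real.sqrt d * σ * Real.sqrt (2 * B)) / (1 - (1 - η * (ℓ / (4 * d)) / 2)) ≤
      24 * Real.sqrt (B * d) * σ / ℓ := by
  obtain ⟨e, he, rfl⟩ : ∃ e, 0 < e ∧ d = e ^ 2 :=
    ⟨Real.sqrt d, Real.sqrt_pos.2 hd, (Real.sq_sqrt hd.le).symm⟩
  have hlhs : η * (25 / 16 / Real.sqrt (e ^ 2) * σ * Real.sqrt (2 * B)) /
      (1 - (1 - η * (ℓ / (4 * e ^ 2)) / 2)) =
        25 / 2 * Real.sqrt 2 * (σ * Real.sqrt B * e) / ℓ := by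
    rw [Real.sqrt_sq he.le, Real.sqrt_mul (by norm_num)]
    field_simp
    ring
  have h2 : Real.sqrt 2 ≤ 3 / 2 := by
    rw [Real.sqrt_le_left (by norm_num)]; norm_num
  rw [hlhs, Real.sqrt_mul hB, Real.sqrt_sq he.le]
  refine div_le_div_of_nonneg_right ?_ hℓ.le
  nlinarith [mul_nonneg (mul_nonneg hσ (Real.sqrt_nonneg B)) he.le]

theorem iterates_stay_close_to_init_general
    (L m din dout r : ℕ) (hL : 2 ≤ L) (hm : 1 ≤ m) (hdout : 1 ≤ dout)
    (X : Matrix (Fin din) (Fin r) ℝ)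
    (Y : Matrix (Fin dout) (Fin r) ℝ)
    (W1 : ℕ → Matrix (Fin m) (Fin din) ℝ) (Wmid : ℕ → ℕ → Matrix (Fin m) (Fin m) ℝ)
    (WL : ℕ → Matrix (Fin dout) (Fin m) ℝ)
    (η : ℝ)
    -- gradient descent dynamics
    (hGD1 : ∀ s, W1 (s + 1) = W1 s - η • grad1 L X Y (W1 s) (fun k => Wmid k s) (WL s))
    (hGDmid : ∀ s, ∀ k, 2 ≤ k → k ≤ L - 1 →
      Wmid k (s + 1) = Wmid k s - η • gradMid L k X Y (W1 s) (fun k' => Wmid k' s) (WL s))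
    (hGDL : ∀ s, WL (s + 1) = WL s - η • gradLast L X Y (W1 s) (fun k => Wmid k s) (WL s))
    (B : ℝ) (hB : 0 < B) (t : ℕ)
    -- step size condition: 0 < ηγ ≤ 1 for γ = L σ_min(X)²/(4 d_out)
    (hηγpos : 0 < η * (L * smin X ^ 2 / (4 * dout)))
    (hηγ : η * (L * smin X ^ 2 / (4 * dout)) ≤ 1)
    -- (i) loss decrease up to time t
    (hloss : ∀ s ≤ t, lossVal L X Y (W1 s) (fun k => Wmid k s) (WL s) ≤
      (1 - η * (L * smin X ^ 2 / (4 * dout))) ^ s * B)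
    -- (ii) spectral norm bounds up to time t
    (hleft : ∀ s ≤ t, ∀ i : ℕ, 1 ≤ i → i ≤ L - 1 →
      smax (WL s * midProd (fun k => Wmid k s) (i + 1) (L - 1)) ≤
        (5 / 4) * (m : ℝ) ^ (((L : ℝ) - i) / 2))
    (hright : ∀ s ≤ t, ∀ i : ℕ, 2 ≤ i → i ≤ L →
      smax (midProd (fun k => Wmid k s) 2 (i - 1) * W1 s * X) ≤
        (5 / 4) * (m : ℝ) ^ (((i : ℝ) - 1) / 2) * smax X) :
    frob (W1 (t + 1) - W1 0) ≤ 24 * Real.sqrt (B * dout) * smax X / (L * smin X ^ 2) ∧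
    (∀ k, 2 ≤ k → k ≤ L - 1 →
      frob (Wmid k (t + 1) - Wmid k 0) ≤
        24 * Real.sqrt (B * dout) * smax X / (L * smin X ^ 2)) ∧
    frob (WL (t + 1) - WL 0) ≤ 24 * Real.sqrt (B * dout) * smax X / (L * smin X ^ 2) := by
  have hη : 0 < η := pos_of_mul_pos_left hηγpos (by positivity)
  have hℓ : 0 < (L : ℝ) * smin X ^ 2 :=
    (div_pos_iff_of_pos_right (by positivity)).1 (pos_of_mul_pos_right hηγpos hη.le)
  set q := 1 - η * (L * smin X ^ 2 / (4 * dout)) / 2 with hq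
  set K := 25 / 16 / Real.sqrt dout * smax X * Real.sqrt (2 * B)
  have hradius : η * K / (1 - q) ≤ 24 * Real.sqrt (B * dout) * smax X / (L * smin X ^ 2) :=
    geometric_steps_le_radius hη (by exact_mod_cast hdout) hℓ (smax_nonneg X) hB.le
  have hsteps {p p' : ℕ} {G : ℕ → Matrix (Fin p) (Fin p') ℝ}
      (hG : ∀ s ≤ t, PartialProductBounds L m X (W1 s) (fun k => Wmid k s) (WL s) →
        frob (G s) ≤ 25 / 16 / Real.sqrt dout * smax X *
          frob (predU L X (W1 s) (fun k => Wmid k s) (WL s) - Y)) :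
      ∀ s ≤ t, frob (G s) ≤ K * q ^ s := fun s hs => by
    refine ((hG s hs ⟨hleft s hs, hright s hs⟩).trans ?_).trans_eq (mul_assoc _ _ _).symm
    exact mul_le_mul_of_nonneg_left (frob_le_of_half_frobSq_le hB.le hηγ (hloss s hs))
      (mul_nonneg (by positivity) (smax_nonneg X))
  have hdisp {p p' : ℕ} {V G : ℕ → Matrix (Fin p) (Fin p') ℝ}
      (hV : ∀ s, V (s + 1) = V s - η • G s) (hG : ∀ s ≤ t, frob (G s) ≤ K * q ^ s) :
      frob (V (t + 1) - V 0) ≤ 24 * Real.sqrt (B * dout) * smax X / (L * smin X ^ 2) :=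
    (frob_sub_le_of_gradient_steps hη.le (by linarith) (by linarith) hV hG).trans hradius
  exact ⟨hdisp hGD1 (hsteps fun _ _ => frob_grad1_le hL hm),
    fun k hk₂ hkL => hdisp (fun s => hGDmid s k hk₂ hkL)
      (hsteps fun _ _ => frob_gradMid_le hk₂ hkL hm),
    hdisp hGDL (hsteps fun _ _ => frob_gradLast_le hL hm)⟩

/-- the gradient descent iterates stay close to initialization. -/
theorem iterates_stay_close_to_init
    (L m din dout r : ℕ) (hL : 2 ≤ L) (hm : 1 ≤ m) (hdin : 1 ≤ din) (hdout : 1 ≤ dout)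
    (hmdout : dout ≤ m)
    (X : Matrix (Fin din) (Fin r) ℝ) (hrank : X.rank = r)
    (Φ : Matrix (Fin dout) (Fin din) ℝ) (Y : Matrix (Fin dout) (Fin r) ℝ) (hY : Y = Φ * X)
    (W1 : ℕ → Matrix (Fin m) (Fin din) ℝ) (Wmid : ℕ → ℕ → Matrix (Fin m) (Fin m) ℝ)
    (WL : ℕ → Matrix (Fin dout) (Fin m) ℝ)
    (η : ℝ) (hη : 0 < η)
    -- gradient descent dynamics
    (hGD1 : ∀ s, W1 (s + 1) = W1 s - η • grad1 L X Y (W1 s) (fun k => Wmid k s) (WL s))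
    (hGDmid : ∀ s, ∀ k, 2 ≤ k → k ≤ L - 1 →
      Wmid k (s + 1) = Wmid k s - η • gradMid L k X Y (W1 s) (fun k' => Wmid k' s) (WL s))
    (hGDL : ∀ s, WL (s + 1) = WL s - η • gradLast L X Y (W1 s) (fun k => Wmid k s) (WL s))
    (B : ℝ) (hB : 0 < B) (t : ℕ)
    -- step size condition: 0 < ηγ ≤ 1 for γ = L σ_min(X)²/(4 d_out)
    (hηγpos : 0 < η * (L * smin X ^ 2 / (4 * dout)))
    (hηγ : η * (L * smin X ^ 2 / (4 * dout)) ≤ 1)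
    -- (i) loss decrease up to time t
    (hloss : ∀ s ≤ t, lossVal L X Y (W1 s) (fun k => Wmid k s) (WL s) ≤
      (1 - η * (L * smin X ^ 2 / (4 * dout))) ^ s * B)
    -- (ii) spectral norm bounds up to time t
    (hleft : ∀ s ≤ t, ∀ i : ℕ, 1 ≤ i → i ≤ L - 1 →
      smax (WL s * midProd (fun k => Wmid k s) (i + 1) (L - 1)) ≤
        (5 / 4) * (m : ℝ) ^ (((L : ℝ) - i) / 2))
    (hright : ∀ s ≤ t, ∀ i : ℕ, 2 ≤ i → i ≤ L →
      smax (midProd (fun k => Wmid k s) 2 (i - 1) * W1 s * X) ≤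
        (5 / 4) * (m : ℝ) ^ (((i : ℝ) - 1) / 2) * smax X) :
    frob (W1 (t + 1) - W1 0) ≤ 24 * Real.sqrt (B * dout) * smax X / (L * smin X ^ 2) ∧
    (∀ k, 2 ≤ k → k ≤ L - 1 →
      frob (Wmid k (t + 1) - Wmid k 0) ≤
        24 * Real.sqrt (B * dout) * smax X / (L * smin X ^ 2)) ∧
    frob (WL (t + 1) - WL 0) ≤ 24 * Real.sqrt (B * dout) * smax X / (L * smin X ^ 2) :=
  iterates_stay_close_to_init_general L m din dout r hL hm hdout X Y W1 Wmid WL η hGD1 hGDmid hGDL B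
    hB t hηγpos hηγ hloss hleft hright
end
end

section
/- There exist universal constants C > 0 and c > 0 with the following property. Let q, m be positive integers with m > C·q, and let Z_1, …, Z_q be i.i.d. random variables each with distribution χ²_m. Then P( Z_q·Z_{q−1}·⋯·Z_1 > 1.1·m^q ) ≤ e^{−c·m/q}. -/
open MeasureTheory ProbabilityTheory
open scoped BigOperators ENNReal

noncomputable section

/-- The chi-square distribution with `k` degrees of freedom: the law of the sum of squares of
`k` i.i.d. standard Gaussians. -/
def chiSq (k : ℕ) : Measure ℝ :=
  Measure.map (fun x : Fin k → ℝ => ∑ i, x i ^ 2) (Measure.pi fun _ => gaussianReal 0 1)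

/-!
Since `z ≤ m * exp (z / m - 1)` for every `z`, a product `Z₁ ⋯ Z_q` of nonnegative numbers
exceeding `1.1 * m ^ q` forces `∑ Zᵢ > q * m + m * log 1.1 ≥ q * m + m / 11`. The sum of the
independent `χ²_m` variables has the `χ²_{qm}` moment generating function `(1 - 2t) ^ (-qm/2)`,
and the Chernoff bound at `t = s / (8n)` gives `P(χ²_n ≥ n + s) ≤ exp (-s² / (16 n))` for
`0 ≤ s ≤ 2n`. With `n = q * m` and `s = m / 11` this is `exp (-m / (1936 q))`.
-/

open Real

lemma prod_le_pow_mul_exp_sum_div {ι : Type*} [Fintype ι] {z : ι → ℝ} {a : ℝ} (ha : 0 < a)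
    (hz : ∀ i, 0 ≤ z i) :
    ∏ i, z i ≤ a ^ Fintype.card ι * exp (∑ i, z i / a - Fintype.card ι) := by
  have hle : ∀ i, z i ≤ a * exp (z i / a - 1) := fun i => by
    have := add_one_le_exp (z i / a - 1)
    rwa [sub_add_cancel, div_le_iff₀' ha] at this
  calc ∏ i, z i ≤ ∏ i, a * exp (z i / a - 1) :=
        Finset.prod_le_prod (fun i _ => hz i) (fun i _ => hle i)
    _ = a ^ Fintype.card ι * exp (∑ i, z i / a - Fintype.card ι) := by
        rw [Finset.prod_mul_distrib, Finset.prod_const, Finset.card_univ, ← exp_sum,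
          Finset.sum_sub_distrib]
        simp

lemma one_div_eleven_le_log_one_point_one : 1 / 11 ≤ log 1.1 := by
  have := one_sub_inv_le_log_of_pos (show (0 : ℝ) < 1.1 by norm_num)
  norm_num at this ⊢
  linarith

lemma add_div_eleven_le_sum_of_mul_pow_lt_prod {ι : Type*} [Fintype ι] {z : ι → ℝ} {a : ℝ}
    (ha : 0 < a) (hz : ∀ i, 0 ≤ z i) (h : 1.1 * a ^ Fintype.card ι < ∏ i, z i) :
    Fintype.card ι * a + a / 11 ≤ ∑ i, z i := by
  have hexp : 1.1 < exp (∑ i, z i / a - Fintype.card ι) := by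
    have := h.trans_le (prod_le_pow_mul_exp_sum_div ha hz)
    rw [mul_comm] at this
    exact lt_of_mul_lt_mul_left this (by positivity)
  have hlog := (log_lt_iff_lt_exp (by norm_num)).mpr hexp
  rw [← Finset.sum_div, lt_sub_iff_add_lt, lt_div_iff₀ ha] at hlog
  nlinarith [one_div_eleven_le_log_one_point_one]

namespace ProbabilityTheory

lemma integral_exp_mul_sq_gaussianReal {t : ℝ} (ht : t < 1 / 2) :
    ∫ x, exp (t * x ^ 2) ∂gaussianReal 0 1 = (1 - 2 * t) ^ (-(1 / 2 : ℝ)) := by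
  have hpos : 0 < 1 - 2 * t := by linarith
  have hdensity : ∀ x : ℝ, gaussianPDFReal 0 1 x • exp (t * x ^ 2)
      = (√(2 * π))⁻¹ * exp (-(1 / 2 - t) * x ^ 2) := fun x => by
    simp only [gaussianPDFReal, smul_eq_mul, NNReal.coe_one, mul_one, sub_zero, mul_assoc,
      ← exp_add]
    ring_nf
  rw [integral_gaussianReal_eq_integral_smul one_ne_zero]
  simp_rw [hdensity]
  rw [integral_const_mul, integral_gaussian, rpow_neg hpos.le, ← sqrt_eq_rpow,
    show π / (1 / 2 - t) = 2 * π / (1 - 2 * t) by field_simp, sqrt_div' _ hpos.le]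
  have : 0 < √(2 * π) := by positivity
  field_simp

lemma measurable_sum_sq (k : ℕ) : Measurable fun x : Fin k → ℝ => ∑ i, x i ^ 2 := by
  fun_prop

instance isProbabilityMeasure_chiSq (k : ℕ) : IsProbabilityMeasure (chiSq k) :=
  Measure.isProbabilityMeasure_map (measurable_sum_sq k).aemeasurable

lemma ae_nonneg_chiSq (k : ℕ) : ∀ᵐ x ∂chiSq k, 0 ≤ x :=
  (ae_map_iff (measurable_sum_sq k).aemeasurable measurableSet_Ici).2 <|
    ae_of_all _ fun _ => Finset.sum_nonneg fun _ _ => sq_nonneg _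

lemma mgf_chiSq (k : ℕ) {t : ℝ} (ht : t < 1 / 2) :
    mgf id (chiSq k) t = (1 - 2 * t) ^ (-(k : ℝ) / 2) := by
  rw [mgf, chiSq, integral_map (measurable_sum_sq k).aemeasurable (by fun_prop)]
  simp only [id, Finset.mul_sum, exp_sum]
  rw [integral_fintype_prod_eq_prod (fun _ x => exp (t * x ^ 2)), Finset.prod_const,
    Finset.card_univ, Fintype.card_fin, integral_exp_mul_sq_gaussianReal ht,
    ← rpow_mul_natCast (by linarith)]
  ring_nf

lemma iIndepFun.mgf_sum_of_map_eq_chiSq {Ω ι : Type*} [Fintype ι] {_ : MeasurableSpace Ω}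
    {μ : Measure Ω} {Z : ι → Ω → ℝ} {k : ℕ} (hindep : iIndepFun Z μ)
    (hZ : ∀ i, μ.map (Z i) = chiSq k) {t : ℝ} (ht : t < 1 / 2) :
    mgf (∑ i, Z i) μ t = (1 - 2 * t) ^ (-(Fintype.card ι * k : ℝ) / 2) := by
  have hmeas : ∀ i, AEMeasurable (Z i) μ :=
    fun i => .of_map_ne_zero (hZ i ▸ IsProbabilityMeasure.ne_zero _)
  rw [hindep.mgf_sum₀ hmeas]
  simp only [← mgf_id_map (hmeas _), hZ, mgf_chiSq k ht, Finset.prod_const, Finset.card_univ]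
  rw [← rpow_mul_natCast (by linarith)]
  ring_nf

lemma measure_add_le_le_exp_of_mgf_eq {Ω : Type*} {_ : MeasurableSpace Ω} {μ : Measure Ω}
    [IsProbabilityMeasure μ] {X : Ω → ℝ} {n s : ℝ}
    (hX : ∀ t, 0 ≤ t → t < 1 / 2 → mgf X μ t = (1 - 2 * t) ^ (-n / 2))
    (hn : 0 < n) (hs : 0 ≤ s) (hsn : s ≤ 2 * n) :
    μ {ω | n + s ≤ X ω} ≤ ENNReal.ofReal (exp (-(s ^ 2 / (16 * n)))) := by
  set t := s / (8 * n) with ht_def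
  have ht0 : 0 ≤ t := by positivity
  have ht4 : t ≤ 1 / 4 := by rw [ht_def, div_le_iff₀ (by positivity)]; linarith
  have hpos : 0 < 1 - 2 * t := by linarith
  have hmgf := hX t ht0 (by linarith)
  have hint : Integrable (fun ω => exp (t * X ω)) μ :=
    mgf_pos_iff.mp (hmgf ▸ rpow_pos_of_pos hpos _)
  -- `log y ≥ 1 - 1/y` at `y = 1 - 2t`, expanded to second order using `t ≤ 1/4`
  have hlog : -2 * t - 8 * t ^ 2 ≤ log (1 - 2 * t) := by
    refine le_trans ?_ (one_sub_inv_le_log_of_pos hpos)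
    rw [le_sub_iff_add_le, ← le_sub_iff_add_le', inv_le_iff_one_le_mul₀ hpos]
    nlinarith [mul_nonneg (mul_nonneg ht0 ht0) (by linarith : 0 ≤ 1 / 4 - t)]
  have hchernoff : exp (-t * (n + s)) * mgf X μ t ≤ exp (-(s ^ 2 / (16 * n))) := by
    rw [hmgf, rpow_def_of_pos hpos, ← exp_add, exp_le_exp]
    calc -t * (n + s) + log (1 - 2 * t) * (-n / 2) ≤ 4 * n * t ^ 2 - t * s := by nlinarith
      _ = -(s ^ 2 / (16 * n)) := by rw [ht_def]; field_simp; ring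
  rw [← ofReal_measureReal]
  exact ENNReal.ofReal_le_ofReal ((measure_ge_le_exp_mul_mgf _ ht0 hint).trans hchernoff)

end ProbabilityTheory

/-- upper tail bound for a product of i.i.d. `χ²_m` random variables. -/
theorem chi_square_product_upper_tail :
    ∃ C > (0 : ℝ), ∃ c > (0 : ℝ),
      ∀ (q m : ℕ), 0 < q → 0 < m → (m : ℝ) > C * q →
      ∀ (Ω : Type) (_ : MeasurableSpace Ω) (μ : Measure Ω), IsProbabilityMeasure μ →
      ∀ Z : Fin q → Ω → ℝ,
        iIndepFun Z μ →
        (∀ i, μ.map (Z i) = chiSq m) →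
        μ {ω | (∏ i, Z i ω) > 1.1 * (m : ℝ) ^ q} ≤
          ENNReal.ofReal (Real.exp (-(c * m / q))) := by
  refine ⟨1, one_pos, 1 / 1936, by norm_num, fun q m hq hm _ Ω _ μ _ Z hindep hZ => ?_⟩
  have hm : (0 : ℝ) < m := Nat.cast_pos.mpr hm
  have hq : (1 : ℝ) ≤ q := Nat.one_le_cast.mpr hq
  have hnonneg : ∀ᵐ ω ∂μ, ∀ i, 0 ≤ Z i ω := ae_all_iff.2 fun i =>
    ae_of_ae_map (.of_map_ne_zero (hZ i ▸ IsProbabilityMeasure.ne_zero _))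
      (hZ i ▸ ae_nonneg_chiSq m)
  have hmgf := fun t (_ : 0 ≤ t) (ht : t < 1 / 2) => hindep.mgf_sum_of_map_eq_chiSq hZ ht
  simp only [Fintype.card_fin] at hmgf
  calc μ {ω | (∏ i, Z i ω) > 1.1 * (m : ℝ) ^ q}
      ≤ μ {ω | q * m + m / 11 ≤ (∑ i, Z i) ω} :=
        measure_mono_ae <| hnonneg.mono fun ω hω hω' => by
          show _ ≤ (∑ i, Z i) ω
          simpa using add_div_eleven_le_sum_of_mul_pow_lt_prod hm hω
            (by rw [Fintype.card_fin]; exact hω')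
    _ ≤ ENNReal.ofReal (exp (-((m / 11) ^ 2 / (16 * (q * m))))) :=
        measure_add_le_le_exp_of_mgf_eq hmgf (by positivity) (by positivity) (by nlinarith)
    _ = ENNReal.ofReal (exp (-(1 / 1936 * m / q))) := by
        congr 3
        field_simp
        ring
end
end
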